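/- arXiv:2305.07554 — 5 statements merged into one kernel-verified Lean document; each statement's English description precedes it below -/
import Mathlib

section
/- Interior loss at 0: for fixed positive reals p_1, …, p_n (n ≥ 0), the function x ↦ L°(p_1, …, p_n, x) tends to 0 as x tends to 0 from the right. -/
open Finset

/-- The total loss of a finite family of reals:
`L(p_1, …, p_n) = Σ_i p_i log(1/p_i) − (Σ_i p_i) log(1/Σ_i p_i)`. -/
noncomputable def totalLoss {ι : Type*} (s : Finset ι) (p : ι → ℝ) : ℝ :=
  ∑ i ∈ s, p i * Real.log (1 / p i) - (∑ i ∈ s, p i) * Real.log (1 / ∑ i ∈ s, p i)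

/-- The interior loss, defined by inclusion–exclusion:
`L°(p_1, …, p_n) = Σ_{S ⊆ {1,…,n}} (−1)^{n−|S|} L((p_i)_{i∈S})`. -/
noncomputable def interiorLoss {ι : Type*} [DecidableEq ι] (s : Finset ι) (p : ι → ℝ) : ℝ :=
  ∑ T ∈ s.powerset, (-1 : ℝ) ^ (s.card - T.card) * totalLoss T p

/-!
Both losses are continuous in the weights, since `t log (1/t) = negMulLog t` extends continuously
to `t = 0`. At `x = 0` the interior loss vanishes: adding a zero weight does not change the total
loss, so the inclusion–exclusion terms for `S` and `S ∪ {n + 1}` cancel in pairs. Hence the limit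
at `0⁺` is the value at `0`, namely `0`.
-/

open Real

section

variable {ι : Type*}

theorem totalLoss_eq_sum_negMulLog (s : Finset ι) (p : ι → ℝ) :
    totalLoss s p = ∑ i ∈ s, negMulLog (p i) - negMulLog (∑ i ∈ s, p i) := by
  simp only [totalLoss, negMulLog, one_div, log_inv, mul_neg, neg_mul]

theorem continuous_totalLoss (s : Finset ι) : Continuous (totalLoss s) := by
  simp only [funext (totalLoss_eq_sum_negMulLog s)]
  fun_prop

theorem continuous_interiorLoss [DecidableEq ι] (s : Finset ι) :
    Continuous (interiorLoss s) :=
  continuous_finsetSum _ fun T _ => continuous_const.mul (continuous_totalLoss T)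

theorem totalLoss_insert_of_eq_zero [DecidableEq ι] {s : Finset ι} {p : ι → ℝ} {a : ι}
    (ha : a ∉ s) (hpa : p a = 0) : totalLoss (insert a s) p = totalLoss s p := by
  simp [totalLoss, sum_insert ha, hpa]

theorem interiorLoss_eq_zero_of_mem [DecidableEq ι] {s : Finset ι} {p : ι → ℝ} {a : ι}
    (ha : a ∈ s) (hpa : p a = 0) : interiorLoss s p = 0 := by
  obtain ⟨t, hat, rfl⟩ : ∃ t, a ∉ t ∧ s = insert a t :=
    ⟨s.erase a, notMem_erase a s, (insert_erase ha).symm⟩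
  rw [interiorLoss, sum_powerset_insert hat, ← sum_add_distrib]
  refine sum_eq_zero fun T hT => ?_
  have hTt : T ⊆ t := mem_powerset.mp hT
  have haT : a ∉ T := fun h => hat (hTt h)
  have hcard : T.card ≤ t.card := card_le_card hTt
  rw [totalLoss_insert_of_eq_zero haT hpa, card_insert_of_notMem haT, card_insert_of_notMem hat,
    Nat.add_sub_add_right, Nat.sub_add_comm hcard, pow_succ]
  ring

end

theorem interiorLoss_tendsto_zero_general {n : ℕ} (p : Fin n → ℝ) :
    Filter.Tendsto (fun x : ℝ => interiorLoss Finset.univ (Fin.snoc p x))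
      (nhdsWithin 0 (Set.Ioi 0)) (nhds 0) := by
  have hcont : Continuous fun x : ℝ => interiorLoss univ (Fin.snoc p x : Fin (n + 1) → ℝ) :=
    (continuous_interiorLoss univ).comp (continuous_const.finSnoc continuous_id)
  have hzero : interiorLoss univ (Fin.snoc p 0 : Fin (n + 1) → ℝ) = 0 :=
    interiorLoss_eq_zero_of_mem (mem_univ (Fin.last n)) (Fin.snoc_last _ _)
  simpa [hzero] using (hcont.tendsto 0).mono_left nhdsWithin_le_nhds

/-- interior loss at 0.  For fixed positive reals `p_1, …, p_n` (n ≥ 0),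
`x ↦ L°(p_1, …, p_n, x)` tends to 0 as `x → 0⁺`. -/
theorem interiorLoss_tendsto_zero {n : ℕ} (p : Fin n → ℝ) (hp : ∀ i, 0 < p i) :
    Filter.Tendsto (fun x : ℝ => interiorLoss Finset.univ (Fin.snoc p x))
      (nhdsWithin 0 (Set.Ioi 0)) (nhds 0) :=
  interiorLoss_tendsto_zero_general p
end

section
/- Intrinsic sign of logarithmic atoms: for any positive reals p_1, …, p_n with n ≥ 2, (−1)^n L°(p_1, …, p_n) ≥ 0; that is, the sign of the interior loss depends only on the parity of the number of arguments. -/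
/-!
Put `φ y = y log y`. Then `L(T) = φ(Σ_{i∈T} p_i) - Σ_{i∈T} φ(p_i)`; the second part is additive in
the family, so it cancels in the alternating sum once `n ≥ 2`, and `(-1)^n L°` becomes
`Σ_T (-1)^|T| φ(Σ_{i∈T} p_i)`, an `n`-fold finite difference of `φ` at `0`, up to sign.
Splitting off one step `p_a`, such a difference over `insert a t` is the decrement over
`[x, x + p_a]` of the difference over `t`, whose derivative is the difference over `t` of the
derivative.
As `φ'' = x⁻¹` is completely monotone, the signs propagate by induction on the family:
differences of `x^(-(m+1))` are `≥ 0`, of `log` are `≤ 0`, and of `φ` are `≥ 0` over at least two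
steps, first at `x > 0` and then at `x = 0` by continuity.
-/

open Finset

open Set

variable {ι : Type*} (p : ι → ℝ)

/-- `altDiff p s f x = (-1)^#s Δ_{p_1} ⋯ Δ_{p_n} f x`, where `Δ_h f x = f (x + h) - f x` and `s`
indexes the steps `p_i`. -/
noncomputable def altDiff (s : Finset ι) (f : ℝ → ℝ) (x : ℝ) : ℝ :=
  ∑ T ∈ s.powerset, (-1 : ℝ) ^ #T * f (x + ∑ i ∈ T, p i)

variable {p}

lemma altDiff_insert [DecidableEq ι] {a : ι} {t : Finset ι} (ha : a ∉ t) (f : ℝ → ℝ) (x : ℝ) :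
    altDiff p (insert a t) f x = altDiff p t f x - altDiff p t f (x + p a) := by
  rw [altDiff, sum_powerset_insert ha, altDiff, altDiff, sub_eq_add_neg, ← sum_neg_distrib]
  congr 1
  refine sum_congr rfl fun T hT => ?_
  have haT : a ∉ T := fun h => ha (mem_powerset.mp hT h)
  rw [card_insert_of_notMem haT, sum_insert haT, pow_succ, add_assoc]
  ring

lemma altDiff_const_mul (s : Finset ι) (c : ℝ) (f : ℝ → ℝ) (x : ℝ) :
    altDiff p s (fun y => c * f y) x = c * altDiff p s f x := by
  simp only [altDiff, mul_sum]
  exact sum_congr rfl fun _ _ => mul_left_comm _ _ _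

lemma altDiff_neg (s : Finset ι) (f : ℝ → ℝ) (x : ℝ) :
    altDiff p s (fun y => -f y) x = -altDiff p s f x := by
  simpa using altDiff_const_mul s (-1) f x

lemma altDiff_add_const {s : Finset ι} (hs : s.Nonempty) (f : ℝ → ℝ) (c x : ℝ) :
    altDiff p s (fun y => f y + c) x = altDiff p s f x := by
  have hsign : ∑ T ∈ s.powerset, (-1 : ℝ) ^ #T = 0 := by
    exact_mod_cast sum_powerset_neg_one_pow_card_of_nonempty hs
  simp only [altDiff, mul_add, sum_add_distrib, ← sum_mul, hsign, zero_mul, add_zero]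

lemma exists_eq_insert_nonempty_of_two_le_card [DecidableEq ι] {s : Finset ι} (hs : 2 ≤ #s) :
    ∃ a t, a ∉ t ∧ insert a t = s ∧ t.Nonempty := by
  obtain ⟨a, t, ha, rfl, ht⟩ := card_eq_succ.mp (Nat.sub_add_cancel (by omega : 1 ≤ #s)).symm
  exact ⟨a, t, ha, rfl, card_pos.mp (by omega)⟩

lemma altDiff_id_eq_zero [DecidableEq ι] {s : Finset ι} (hs : 2 ≤ #s) (x : ℝ) :
    altDiff p s id x = 0 := by
  obtain ⟨a, t, ha, rfl, ht⟩ := exists_eq_insert_nonempty_of_two_le_card hs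
  have hshift : altDiff p t id (x + p a) = altDiff p t (fun y => id y + p a) x := by
    simp only [altDiff, id, add_right_comm]
  rw [altDiff_insert ha, hshift, altDiff_add_const ht, sub_self]

lemma hasDerivAt_altDiff {s : Finset ι} {f f' : ℝ → ℝ} {x : ℝ}
    (hf : ∀ T ∈ s.powerset, HasDerivAt f (f' (x + ∑ i ∈ T, p i)) (x + ∑ i ∈ T, p i)) :
    HasDerivAt (altDiff p s f) (altDiff p s f' x) x := by
  unfold altDiff
  refine HasDerivAt.fun_sum fun T hT => ?_
  simpa using ((hf T hT).comp x ((hasDerivAt_id x).add_const _)).const_mul ((-1 : ℝ) ^ #T)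

lemma altDiff_insert_nonneg [DecidableEq ι] {a : ι} {t : Finset ι} (ha : a ∉ t)
    (hp : ∀ i ∈ insert a t, 0 ≤ p i) {f f' : ℝ → ℝ} (hf : ∀ y, 0 < y → HasDerivAt f (f' y) y)
    (hf' : ∀ y, 0 < y → altDiff p t f' y ≤ 0) {x : ℝ} (hx : 0 < x) :
    0 ≤ altDiff p (insert a t) f x := by
  have hpt (T) (hT : T ∈ t.powerset) : 0 ≤ ∑ i ∈ T, p i :=
    sum_nonneg fun i hi => hp i (mem_insert_of_mem (mem_powerset.mp hT hi))
  have hderiv (y : ℝ) (hy : 0 < y) : HasDerivAt (altDiff p t f) (altDiff p t f' y) y :=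
    hasDerivAt_altDiff fun T hT => hf _ (add_pos_of_pos_of_nonneg hy (hpt T hT))
  have hanti : AntitoneOn (altDiff p t f) (Ioi 0) := by
    refine antitoneOn_of_deriv_nonpos (convex_Ioi 0)
      (fun y hy => (hderiv y hy).continuousAt.continuousWithinAt) ?_ ?_
    · rw [interior_Ioi]
      exact fun y hy => (hderiv y hy).differentiableAt.differentiableWithinAt
    · rw [interior_Ioi]
      exact fun y hy => (hderiv y hy).deriv ▸ hf' y hy
  have hpa : 0 ≤ p a := hp a (mem_insert_self a t)
  rw [altDiff_insert ha, sub_nonneg]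
  exact hanti hx (add_pos_of_pos_of_nonneg hx hpa) (le_add_of_nonneg_right hpa)

lemma altDiff_zpow_nonneg [DecidableEq ι] {s : Finset ι} (hp : ∀ i ∈ s, 0 ≤ p i) (m : ℕ)
    {x : ℝ} (hx : 0 < x) : 0 ≤ altDiff p s (fun y => y ^ (-(m + 1 : ℤ))) x := by
  induction s using Finset.induction_on generalizing m x with
  | empty => simpa [altDiff] using zpow_nonneg hx.le _
  | insert a t ha ih =>
    refine altDiff_insert_nonneg ha hp (fun y hy => hasDerivAt_zpow _ y (Or.inl hy.ne')) ?_ hx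
    intro y hy
    have hnext := ih (fun i hi => hp i (mem_insert_of_mem hi)) (m + 1) hy
    have hexp : -(m + 1 : ℤ) - 1 = -((m + 1 : ℕ) + 1 : ℤ) := by push_cast; ring
    rw [altDiff_const_mul, hexp]
    exact mul_nonpos_of_nonpos_of_nonneg (by push_cast; linarith) hnext

lemma altDiff_log_nonpos [DecidableEq ι] {s : Finset ι} (hs : s.Nonempty)
    (hp : ∀ i ∈ s, 0 ≤ p i) {x : ℝ} (hx : 0 < x) : altDiff p s Real.log x ≤ 0 := by
  obtain ⟨t, a, ha, rfl⟩ := hs.exists_cons_eq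
  rw [cons_eq_insert] at hp ⊢
  have hneg := altDiff_insert_nonneg ha hp (f := fun y => -Real.log y)
    (fun y hy => (Real.hasDerivAt_log hy.ne').neg) ?_ hx
  · simpa [altDiff_neg] using hneg
  · intro y hy
    have hinv := altDiff_zpow_nonneg (fun i hi => hp i (mem_insert_of_mem hi)) 0 hy
    rw [altDiff_neg, neg_nonpos]
    simpa using hinv

lemma altDiff_mul_log_nonneg [DecidableEq ι] {s : Finset ι} (hs : 2 ≤ #s)
    (hp : ∀ i ∈ s, 0 ≤ p i) {x : ℝ} (hx : 0 ≤ x) :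
    0 ≤ altDiff p s (fun y => y * Real.log y) x := by
  have hpos : ∀ y ∈ Ioi (0 : ℝ), 0 ≤ altDiff p s (fun y => y * Real.log y) y := by
    obtain ⟨a, t, ha, rfl, ht⟩ := exists_eq_insert_nonempty_of_two_le_card hs
    refine fun y hy => altDiff_insert_nonneg ha hp (fun y hy => Real.hasDerivAt_mul_log hy.ne')
      (fun z hz => ?_) hy
    rw [altDiff_add_const ht]
    exact altDiff_log_nonpos ht (fun i hi => hp i (mem_insert_of_mem hi)) hz
  have hcont : Continuous (altDiff p s fun y => y * Real.log y) :=
    continuous_finsetSum _ fun T _ =>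
      continuous_const.mul (Real.continuous_mul_log.comp (continuous_add_const _))
  have hclosed : IsClosed {y | 0 ≤ altDiff p s (fun y => y * Real.log y) y} :=
    isClosed_le continuous_const hcont
  exact hclosed.closure_subset_iff.mpr hpos (closure_Ioi (0 : ℝ) ▸ hx)

lemma neg_one_pow_mul_neg_one_pow_sub {n k : ℕ} (hk : k ≤ n) :
    (-1 : ℝ) ^ n * (-1) ^ (n - k) = (-1) ^ k := by
  rw [← pow_add, show n + (n - k) = k + 2 * (n - k) by omega, pow_add, pow_mul]
  norm_num

lemma totalLoss_eq_mul_log_sub (T : Finset ι) :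
    totalLoss T p = (∑ i ∈ T, p i) * Real.log (∑ i ∈ T, p i) - ∑ i ∈ T, p i * Real.log (p i) := by
  simp only [totalLoss, one_div, Real.log_inv, mul_neg, sum_neg_distrib]
  ring

lemma neg_one_pow_card_mul_interiorLoss [DecidableEq ι] (s : Finset ι) :
    (-1 : ℝ) ^ #s * interiorLoss s p = altDiff p s (fun y => y * Real.log y) 0
      - altDiff (fun i => p i * Real.log (p i)) s id 0 := by
  simp only [interiorLoss, altDiff, mul_sum, ← sum_sub_distrib, zero_add, id]
  refine sum_congr rfl fun T hT => ?_
  rw [← mul_assoc, neg_one_pow_mul_neg_one_pow_sub (Finset.card_le_card (mem_powerset.mp hT)),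
    totalLoss_eq_mul_log_sub, ← mul_sum]
  ring

theorem neg_one_pow_card_mul_interiorLoss_nonneg [DecidableEq ι] {s : Finset ι} (hs : 2 ≤ #s)
    (hp : ∀ i ∈ s, 0 ≤ p i) : 0 ≤ (-1 : ℝ) ^ #s * interiorLoss s p := by
  rw [neg_one_pow_card_mul_interiorLoss, altDiff_id_eq_zero hs, sub_zero]
  exact altDiff_mul_log_nonneg hs hp le_rfl

/-- intrinsic sign of logarithmic atoms.  For positive reals
`p_1, …, p_n` with `n ≥ 2`, `(−1)^n L°(p_1, …, p_n) ≥ 0`. -/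
theorem sign_interiorLoss {n : ℕ} (hn : 2 ≤ n) (p : Fin n → ℝ) (hp : ∀ i, 0 < p i) :
    0 ≤ (-1 : ℝ) ^ n * interiorLoss Finset.univ p := by
  simpa using neg_one_pow_card_mul_interiorLoss_nonneg (s := Finset.univ) (by simpa using hn)
    fun i _ => (hp i).le
end

section
/- Interior magnitude can only decrease: for positive reals p_1, …, p_{n−1} with n ≥ 3 and any τ > 0, one has the strict inequality |L°(p_1, …, p_{n−1}, τ)| < |L°(p_1, …, p_{n−1})|. -/
open Finset

/-!
Up to terms linear in the subfamily, which inclusion–exclusion kills as soon as `n ≥ 2`, the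
total loss of a subfamily is `φ(Σ_{i∈S} p_i)` with `φ x = x log x`, so `L°(p_1, …, p_n)` is the
mixed forward difference `Δ_{p_1} ⋯ Δ_{p_n} φ (0)`. Adjoining `τ` gives
`L°(p, τ) = D(τ) − D(0)` with `D(c) = Δ_{p_1} ⋯ Δ_{p_{n-1}} φ (c)`. Since `φ'' = x⁻¹` and the
derivatives of `x⁻¹` alternate in sign, a mean-value induction shows that `(−1)^k` times any
`k`-fold difference of `φ` (with `k ≥ 2`) at a point `c ≥ 0` is positive. Applied with `k = n − 1`
and `k = n` this gives `0 < ±D(τ) < ±D(0)` for one common sign, hence `|D(τ) − D(0)| < |D(0)|`.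
-/

noncomputable def multiFwdDiff {ι : Type*} (p : ι → ℝ) (s : Finset ι) (f : ℝ → ℝ) (x : ℝ) : ℝ :=
  ∑ T ∈ s.powerset, (-1 : ℝ) ^ (s.card - T.card) * f (x + ∑ i ∈ T, p i)

section multiFwdDiff

variable {ι : Type*} (p : ι → ℝ)

@[simp]
lemma multiFwdDiff_empty (f : ℝ → ℝ) (x : ℝ) : multiFwdDiff p ∅ f x = f x := by
  simp [multiFwdDiff]

lemma multiFwdDiff_const_mul (s : Finset ι) (r : ℝ) (f : ℝ → ℝ) (x : ℝ) :
    multiFwdDiff p s (fun y => r * f y) x = r * multiFwdDiff p s f x := by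
  simp only [multiFwdDiff, mul_sum]
  exact sum_congr rfl fun _ _ => by ring

lemma multiFwdDiff_add (s : Finset ι) (f g : ℝ → ℝ) (x : ℝ) :
    multiFwdDiff p s (fun y => f y + g y) x = multiFwdDiff p s f x + multiFwdDiff p s g x := by
  simp only [multiFwdDiff, mul_add, sum_add_distrib]

lemma continuousOn_multiFwdDiff {s : Finset ι} (hp : ∀ i ∈ s, 0 ≤ p i) {f : ℝ → ℝ} {c : ℝ}
    (hf : ContinuousOn f (Set.Ici c)) : ContinuousOn (multiFwdDiff p s f) (Set.Ici c) :=
  continuousOn_finsetSum _ fun _ hT => continuousOn_const.mul <|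
    hf.comp (continuousOn_id.add continuousOn_const) fun x (hx : c ≤ x) =>
      Set.mem_Ici.mpr (le_add_of_le_of_nonneg hx
        (sum_nonneg fun i hi => hp i (mem_powerset.mp hT hi)))

lemma hasDerivAt_multiFwdDiff {s : Finset ι} (hp : ∀ i ∈ s, 0 ≤ p i) {f f' : ℝ → ℝ} {c x : ℝ}
    (hf : ∀ y, c < y → HasDerivAt f (f' y) y) (hx : c < x) :
    HasDerivAt (multiFwdDiff p s f) (multiFwdDiff p s f' x) x := by
  refine HasDerivAt.fun_sum fun T hT => HasDerivAt.const_mul _ ?_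
  have hsum : 0 ≤ ∑ i ∈ T, p i := sum_nonneg fun i hi => hp i (mem_powerset.mp hT hi)
  exact (hf _ (by linarith)).comp_add_const x _

variable [DecidableEq ι]

lemma multiFwdDiff_insert {a : ι} {s : Finset ι} (ha : a ∉ s) (f : ℝ → ℝ) (x : ℝ) :
    multiFwdDiff p (insert a s) f x = multiFwdDiff p s f (x + p a) - multiFwdDiff p s f x := by
  have without_a : ∀ T ∈ s.powerset, (-1 : ℝ) ^ (s.card + 1 - T.card) * f (x + ∑ i ∈ T, p i)
      = -((-1) ^ (s.card - T.card) * f (x + ∑ i ∈ T, p i)) := fun T hT => by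
    rw [Nat.succ_sub (card_le_card (mem_powerset.mp hT)), pow_succ]
    ring
  have with_a : ∀ T ∈ s.powerset, (-1 : ℝ) ^ (s.card + 1 - (insert a T).card)
        * f (x + ∑ i ∈ insert a T, p i)
      = (-1) ^ (s.card - T.card) * f (x + p a + ∑ i ∈ T, p i) := fun T hT => by
    have haT : a ∉ T := fun h => ha (mem_powerset.mp hT h)
    rw [card_insert_of_notMem haT, sum_insert haT, Nat.add_sub_add_right, add_assoc]
  rw [multiFwdDiff, sum_powerset_insert ha, card_insert_of_notMem ha, sum_congr rfl without_a,
    sum_congr rfl with_a, sum_neg_distrib, multiFwdDiff, multiFwdDiff]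
  ring

lemma multiFwdDiff_const {s : Finset ι} (hs : s.Nonempty) (r x : ℝ) :
    multiFwdDiff p s (fun _ => r) x = 0 := by
  obtain ⟨a, ha⟩ := hs
  rw [← insert_erase ha, multiFwdDiff_insert p (notMem_erase a s), sub_eq_zero]
  rfl

lemma multiFwdDiff_id {s : Finset ι} (hs : 2 ≤ s.card) (x : ℝ) :
    multiFwdDiff p s (fun y => y) x = 0 := by
  obtain ⟨a, ha⟩ : s.Nonempty := card_pos.mp (by omega)
  have ht : (s.erase a).Nonempty := card_pos.mp (by rw [card_erase_of_mem ha]; omega)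
  rw [← insert_erase ha, multiFwdDiff_insert p (notMem_erase a s), sub_eq_zero]
  calc multiFwdDiff p (s.erase a) (fun y => y) (x + p a)
      = multiFwdDiff p (s.erase a) (fun y => y + p a) x := by
        simp only [multiFwdDiff, add_right_comm]
    _ = multiFwdDiff p (s.erase a) (fun y => y) x := by
        rw [multiFwdDiff_add, multiFwdDiff_const p ht, add_zero]

lemma multiFwdDiff_map {κ : Type*} [DecidableEq κ] (e : ι ↪ κ) (q : κ → ℝ) (s : Finset ι)
    (f : ℝ → ℝ) (x : ℝ) : multiFwdDiff q (s.map e) f x = multiFwdDiff (q ∘ e) s f x := by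
  induction s using Finset.induction_on generalizing x with
  | empty => simp
  | insert a s ha ih =>
    rw [map_insert, multiFwdDiff_insert q (by simpa using ha), multiFwdDiff_insert _ ha, ih, ih]
    rfl

lemma multiFwdDiff_snoc {m : ℕ} (p : Fin m → ℝ) (τ : ℝ) (f : ℝ → ℝ) (x : ℝ) :
    multiFwdDiff (Fin.snoc p τ : Fin (m + 1) → ℝ) univ f x
      = multiFwdDiff p univ f (x + τ) - multiFwdDiff p univ f x := by
  rw [Fin.univ_castSuccEmb, cons_eq_insert, multiFwdDiff_insert _ (by simp), multiFwdDiff_map,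
    multiFwdDiff_map, Fin.snoc_last]
  simp

lemma interiorLoss_eq_multiFwdDiff {s : Finset ι} (hs : 2 ≤ s.card) :
    interiorLoss s p = multiFwdDiff p s (fun x => x * Real.log x) 0 := by
  have htotal : ∀ T : Finset ι, totalLoss T p = (0 + ∑ i ∈ T, p i) * Real.log (0 + ∑ i ∈ T, p i)
      - (0 + ∑ i ∈ T, p i * Real.log (p i)) := fun T => by
    simp only [totalLoss, one_div, Real.log_inv, zero_add, mul_neg, sum_neg_distrib]
    ring
  calc interiorLoss s p = multiFwdDiff p s (fun x => x * Real.log x) 0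
        - multiFwdDiff (fun i => p i * Real.log (p i)) s (fun y => y) 0 := by
        simp only [interiorLoss, multiFwdDiff, htotal, mul_sub, sum_sub_distrib]
    _ = _ := by rw [multiFwdDiff_id _ hs, sub_zero]

lemma multiFwdDiff_insert_pos {a : ι} {s : Finset ι} (ha : a ∉ s) (hpa : 0 < p a)
    (hp : ∀ i ∈ s, 0 ≤ p i) {f f' : ℝ → ℝ} {c : ℝ} (hf : ContinuousOn f (Set.Ici c))
    (hf' : ∀ x, c < x → HasDerivAt f (f' x) x) (hpos : ∀ x, c < x → 0 < multiFwdDiff p s f' x) :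
    0 < multiFwdDiff p (insert a s) f c := by
  have hmono : StrictMonoOn (multiFwdDiff p s f) (Set.Ici c) :=
    strictMonoOn_of_deriv_pos (convex_Ici c) (continuousOn_multiFwdDiff p hp hf) fun x hx => by
      rw [interior_Ici] at hx
      rw [(hasDerivAt_multiFwdDiff p hp hf' hx).deriv]
      exact hpos x hx
  rw [multiFwdDiff_insert p ha, sub_pos]
  exact hmono (Set.mem_Ici.mpr le_rfl) (by simp only [Set.mem_Ici]; linarith) (by linarith)

lemma neg_one_pow_card_mul_multiFwdDiff_zpow_pos {s : Finset ι} (hp : ∀ i ∈ s, 0 < p i) {k : ℤ}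
    (hk : k < 0) {c : ℝ} (hc : 0 < c) :
    0 < (-1) ^ s.card * multiFwdDiff p s (fun x => x ^ k) c := by
  induction s using Finset.induction_on generalizing k c with
  | empty => simpa using zpow_pos hc k
  | insert a s ha ih =>
    have hps : ∀ i ∈ s, 0 < p i := fun i hi => hp i (mem_insert_of_mem hi)
    rw [card_insert_of_notMem ha, ← multiFwdDiff_const_mul]
    refine multiFwdDiff_insert_pos p ha (hp a (mem_insert_self a s)) (fun i hi => (hps i hi).le)
      (f' := fun x => (-1) ^ (s.card + 1) * (k * x ^ (k - 1)))
      (continuousOn_const.mul ((continuousOn_zpow₀ k).mono fun x (hx : c ≤ x) =>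
        (hc.trans_le hx).ne'))
      (fun x hx => ((hasDerivAt_zpow k x (Or.inl (hc.trans hx).ne')).const_mul _)) fun x hx => ?_
    have hk' : (0 : ℝ) < -k := by exact_mod_cast neg_pos.mpr hk
    rw [multiFwdDiff_const_mul, multiFwdDiff_const_mul,
      show (-1 : ℝ) ^ (s.card + 1) * (k * multiFwdDiff p s (fun x => x ^ (k - 1)) x)
        = -k * ((-1) ^ s.card * multiFwdDiff p s (fun x => x ^ (k - 1)) x) by ring]
    exact mul_pos hk' (ih hps (by omega) (hc.trans hx))

lemma neg_one_pow_card_succ_mul_multiFwdDiff_log_pos {s : Finset ι} (hs : s.Nonempty)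
    (hp : ∀ i ∈ s, 0 < p i) {c : ℝ} (hc : 0 < c) :
    0 < (-1) ^ (s.card + 1) * multiFwdDiff p s Real.log c := by
  obtain ⟨a, ha⟩ := hs
  have hpt : ∀ i ∈ s.erase a, 0 < p i := fun i hi => hp i (mem_of_mem_erase hi)
  rw [← insert_erase ha, card_insert_of_notMem (notMem_erase a s), ← multiFwdDiff_const_mul]
  refine multiFwdDiff_insert_pos p (notMem_erase a s) (hp a ha) (fun i hi => (hpt i hi).le)
    (f' := fun x => (-1) ^ ((s.erase a).card + 1 + 1) * x⁻¹)
    (continuousOn_const.mul (Real.continuousOn_log.mono fun x (hx : c ≤ x) =>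
      (hc.trans_le hx).ne'))
    (fun x hx => (Real.hasDerivAt_log (hc.trans hx).ne').const_mul _) fun x hx => ?_
  have h := neg_one_pow_card_mul_multiFwdDiff_zpow_pos p hpt (k := -1) (by norm_num) (hc.trans hx)
  simp only [zpow_neg_one] at h
  rw [multiFwdDiff_const_mul, pow_succ, pow_succ]
  linarith

lemma neg_one_pow_card_mul_multiFwdDiff_mul_log_pos {s : Finset ι} (hs : 2 ≤ s.card)
    (hp : ∀ i ∈ s, 0 < p i) {c : ℝ} (hc : 0 ≤ c) :
    0 < (-1) ^ s.card * multiFwdDiff p s (fun x => x * Real.log x) c := by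
  obtain ⟨a, ha⟩ : s.Nonempty := card_pos.mp (by omega)
  have ht : (s.erase a).Nonempty := card_pos.mp (by rw [card_erase_of_mem ha]; omega)
  have hpt : ∀ i ∈ s.erase a, 0 < p i := fun i hi => hp i (mem_of_mem_erase hi)
  rw [← insert_erase ha, card_insert_of_notMem (notMem_erase a s), ← multiFwdDiff_const_mul]
  refine multiFwdDiff_insert_pos p (notMem_erase a s) (hp a ha) (fun i hi => (hpt i hi).le)
    (f' := fun x => (-1) ^ ((s.erase a).card + 1) * (Real.log x + 1))
    (continuous_const.mul Real.continuous_mul_log).continuousOn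
    (fun x hx => (Real.hasDerivAt_mul_log (hc.trans_lt hx).ne').const_mul _) fun x hx => ?_
  rw [multiFwdDiff_const_mul, multiFwdDiff_add, multiFwdDiff_const p ht, add_zero]
  exact neg_one_pow_card_succ_mul_multiFwdDiff_log_pos p ht hpt (hc.trans_lt hx)

end multiFwdDiff

lemma abs_sub_lt_abs_of_mul_pos {ε a b : ℝ} (hε : |ε| = 1) (hb : 0 < ε * b)
    (hab : 0 < ε * (a - b)) : |b - a| < |a| := by
  have habs : ∀ x, |x| = |ε * x| := fun x => by rw [abs_mul, hε, one_mul]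
  rw [habs, habs a, abs_of_neg (by linarith), abs_of_pos (by linarith)]
  linarith

/-- interior magnitude can only decrease.  For positive reals
`p_1, …, p_{n−1}` with `n ≥ 3` (so `m = n − 1 ≥ 2` fixed arguments) and any `τ > 0`,
`|L°(p_1, …, p_{n−1}, τ)| < |L°(p_1, …, p_{n−1})|`. -/
theorem abs_interiorLoss_lt {m : ℕ} (hm : 2 ≤ m)
    (p : Fin m → ℝ) (hp : ∀ i, 0 < p i) (τ : ℝ) (hτ : 0 < τ) :
    |interiorLoss Finset.univ (Fin.snoc p τ)| < |interiorLoss Finset.univ p| := by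
  have hq : ∀ i, 0 < (Fin.snoc p τ : Fin (m + 1) → ℝ) i :=
    Fin.lastCases (by simpa using hτ) fun i => by simpa using hp i
  have hcard : (univ : Finset (Fin m)).card = m := card_fin m
  have hsign := neg_one_pow_card_mul_multiFwdDiff_mul_log_pos p (s := univ) (by omega)
    (fun i _ => hp i) hτ.le
  have hdecrease := neg_one_pow_card_mul_multiFwdDiff_mul_log_pos _ (s := univ)
    (by rw [card_fin]; omega) (fun i _ => hq i) le_rfl
  rw [card_fin, multiFwdDiff_snoc, zero_add, pow_succ] at hdecrease
  rw [hcard] at hsign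
  rw [interiorLoss_eq_multiFwdDiff _ (by rw [card_fin]; omega), multiFwdDiff_snoc, zero_add,
    interiorLoss_eq_multiFwdDiff _ (by omega)]
  exact abs_sub_lt_abs_of_mul_pos (by simp) hsign (by linarith)
end

section
/- Entropy as the measure of the content: H(X) = Σ_{S ∈ C(X)} L°(S), i.e. the Shannon entropy of X equals the sum of the interior losses of all subsets of Ω on which X is not constant. -/
/-!
Möbius inversion on the lattice of subsets turns the definition of `L°` into
`L(S) = Σ_{T ⊆ S} L°(T)`. As `Σ P = 1`, the entropy is `L(Ω) − Σ_a L(X⁻¹ a)`. Expanding every total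
loss into interior losses, the subsets of the fibres `X⁻¹ a` are exactly the subsets on which `X`
is constant (the empty one, counted once per fibre, has `L°(∅) = 0`), so what survives the
subtraction is the sum of `L°` over the content.
-/

open Finset
open scoped Classical

/-- The probability that the random variable `X : Ω → α` takes the value `a`,
with respect to the mass function `P`. -/
noncomputable def probOf {Ω α : Type*} [Fintype Ω] (P : Ω → ℝ) (X : Ω → α) (a : α) : ℝ :=
  ∑ ω ∈ Finset.univ.filter (fun ω => X ω = a), P ω

/-- The Shannon entropy `H(X) = Σ_{a ∈ X(Ω)} P(X = a) log(1/P(X = a))` of a random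
variable `X : Ω → α` with respect to the mass function `P`. -/
noncomputable def entropy {Ω α : Type*} [Fintype Ω] (P : Ω → ℝ) (X : Ω → α) : ℝ :=
  ∑ a ∈ Finset.univ.image X, probOf P X a * Real.log (1 / probOf P X a)

/-- The content `C(X)` of a random variable `X : Ω → α`: the collection of subsets
`S ⊆ Ω` with `|S| ≥ 2` on which `X` is not constant. -/
noncomputable def content {Ω α : Type*} [Fintype Ω] (X : Ω → α) : Finset (Finset Ω) :=
  Finset.univ.filter (fun S => 2 ≤ S.card ∧ ∃ ω ∈ S, ∃ ω2 ∈ S, X ω ≠ X ω2)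

namespace Finset

variable {ι R : Type*} [DecidableEq ι] [CommRing R]

theorem sum_powerset_filter_superset_neg_one_pow {s U : Finset ι} (hU : U ⊆ s) :
    ∑ T ∈ s.powerset with U ⊆ T, (-1 : R) ^ (#T - #U) = if U = s then 1 else 0 := by
  have h_shift : ∑ T ∈ s.powerset with U ⊆ T, (-1 : R) ^ (#T - #U)
      = ∑ V ∈ (s \ U).powerset, (-1 : R) ^ #V := by
    refine sum_nbij' (· \ U) (U ∪ ·) ?_ ?_ ?_ ?_ ?_
    · intro T hT
      rw [mem_filter, mem_powerset] at hT
      exact mem_powerset.2 (sdiff_subset_sdiff hT.1 le_rfl)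
    · intro V hV
      rw [mem_powerset] at hV
      exact mem_filter.2 ⟨mem_powerset.2 (union_subset hU (hV.trans sdiff_subset)),
        subset_union_left⟩
    · intro T hT
      exact union_sdiff_of_subset (mem_filter.1 hT).2
    · intro V hV
      exact union_sdiff_cancel_left (disjoint_of_subset_right (mem_powerset.1 hV) disjoint_sdiff)
    · intro T hT
      rw [card_sdiff_of_subset (mem_filter.1 hT).2]
  have h_alternating := congrArg (Int.cast : ℤ → R) (sum_powerset_neg_one_pow_card (x := s \ U))
  push_cast at h_alternating
  have h_empty : s \ U = ∅ ↔ U = s :=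
    sdiff_eq_empty_iff_subset.trans ⟨subset_antisymm hU, (·.ge)⟩
  rw [h_shift, h_alternating]
  simp only [h_empty]

theorem sum_powerset_sum_powerset_neg_one_pow_mul (s : Finset ι) (f : Finset ι → R) :
    ∑ T ∈ s.powerset, ∑ U ∈ T.powerset, (-1 : R) ^ (#T - #U) * f U = f s := by
  rw [sum_comm' (t' := s.powerset) (s' := fun U => {T ∈ s.powerset | U ⊆ T})
    (fun T U => by simp only [mem_powerset, mem_filter]; grind)]
  simp_rw [← sum_mul]
  rw [sum_congr rfl fun U hU => by
    rw [sum_powerset_filter_superset_neg_one_pow (mem_powerset.1 hU)]]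
  simp

theorem sum_powerset_filter_forall_eq_sum_image {κ M : Type*} [DecidableEq κ] [AddCommMonoid M]
    (s : Finset ι) (g : ι → κ) (f : Finset ι → M) (hf : f ∅ = 0) :
    ∑ T ∈ s.powerset with ∀ x ∈ T, ∀ y ∈ T, g x = g y, f T =
      ∑ a ∈ s.image g, ∑ T ∈ {x ∈ s | g x = a}.powerset, f T := by
  have h_nonempty : ∀ t : Finset (Finset ι), ∑ T ∈ t with T.Nonempty, f T = ∑ T ∈ t, f T :=
    fun t => sum_filter_of_ne fun T _ hT => nonempty_iff_ne_empty.2 (by rintro rfl; exact hT hf)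
  have h_disj : (s.image g : Set κ).PairwiseDisjoint
      fun a => {T ∈ {x ∈ s | g x = a}.powerset | T.Nonempty} := by
    intro a _ b _ hab
    refine disjoint_left.2 fun T hTa hTb => ?_
    simp only [mem_filter, mem_powerset, subset_iff] at hTa hTb
    obtain ⟨x, hx⟩ := hTa.2
    exact hab ((hTa.1 hx).2.symm.trans (hTb.1 hx).2)
  rw [← h_nonempty, filter_filter, sum_congr rfl fun a _ => (h_nonempty _).symm,
    ← sum_biUnion h_disj]
  congr 1
  ext T
  simp only [mem_filter, mem_powerset, mem_biUnion, mem_image, subset_iff]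
  constructor
  · rintro ⟨hTs, hconst, x, hx⟩
    exact ⟨g x, ⟨x, hTs hx, rfl⟩, fun y hy => ⟨hTs hy, hconst y hy x hx⟩, x, hx⟩
  · rintro ⟨a, -, hTa, hne⟩
    exact ⟨fun x hx => (hTa hx).1, fun x hx y hy => (hTa hx).2.trans (hTa hy).2.symm, hne⟩

end Finset

theorem totalLoss_eq_sum_interiorLoss {ι : Type*} [DecidableEq ι] (s : Finset ι) (p : ι → ℝ) :
    totalLoss s p = ∑ T ∈ s.powerset, interiorLoss T p :=
  (sum_powerset_sum_powerset_neg_one_pow_mul s (totalLoss · p)).symm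

theorem interiorLoss_empty {ι : Type*} [DecidableEq ι] (p : ι → ℝ) :
    interiorLoss (∅ : Finset ι) p = 0 := by
  simp [interiorLoss, totalLoss]

theorem sum_totalLoss_fiber {Ω α : Type*} [Fintype Ω] (P : Ω → ℝ) (X : Ω → α) :
    ∑ a ∈ univ.image X, totalLoss {ω | X ω = a} P =
      ∑ ω, P ω * Real.log (1 / P ω) - entropy P X := by
  rw [entropy, ← sum_fiberwise_of_maps_to (fun ω _ => mem_image_of_mem X (mem_univ ω)),
    ← sum_sub_distrib]
  simp only [totalLoss, probOf]

theorem content_eq_filter_not_forall {Ω α : Type*} [Fintype Ω] (X : Ω → α) :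
    content X = univ.filter fun S => ¬ ∀ ω ∈ S, ∀ ω' ∈ S, X ω = X ω' := by
  ext S
  simp only [content, mem_filter, mem_univ, true_and, not_forall, exists_prop]
  refine ⟨fun h => h.2, fun ⟨ω, hω, ω', hω', hne⟩ => ⟨?_, ω, hω, ω', hω', hne⟩⟩
  exact one_lt_card.2 ⟨ω, hω, ω', hω', fun h => hne (congrArg X h)⟩

theorem entropy_eq_sum_content_general {Ω α : Type*} [Fintype Ω] (P : Ω → ℝ) (hsum : ∑ ω, P ω = 1)
    (X : Ω → α) :
    entropy P X = ∑ S ∈ content X, interiorLoss S P := by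
  have h_univ : totalLoss univ P = ∑ ω, P ω * Real.log (1 / P ω) := by
    simp [totalLoss, hsum]
  have h_constant :=
    sum_powerset_filter_forall_eq_sum_image univ X (interiorLoss · P) (interiorLoss_empty P)
  -- the filter instance comes from `DecidableEq α`; bring it to the one elaborated here
  rw [powerset_univ, filter_congr_decidable] at h_constant
  have h_split := sum_filter_add_sum_filter_not univ
    (fun S : Finset Ω => ∀ ω ∈ S, ∀ ω' ∈ S, X ω = X ω') (interiorLoss · P)
  calc entropy P X
      = totalLoss univ P - ∑ a ∈ univ.image X, totalLoss {ω | X ω = a} P := by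
        rw [sum_totalLoss_fiber, h_univ, sub_sub_cancel]
    _ = ∑ S, interiorLoss S P -
          ∑ S with ∀ ω ∈ S, ∀ ω' ∈ S, X ω = X ω', interiorLoss S P := by
        simp_rw [totalLoss_eq_sum_interiorLoss, ← h_constant, powerset_univ]
    _ = ∑ S ∈ content X, interiorLoss S P := by
        rw [content_eq_filter_not_forall, ← h_split, add_sub_cancel_left]

/-- entropy as the measure of the content.
`H(X) = Σ_{S ∈ C(X)} L°(S)`: the Shannon entropy of `X` equals the sum of the interior
losses of (the probabilities of the points of) all subsets of `Ω` on which `X` is not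
constant. -/
theorem entropy_eq_sum_content {Ω α : Type*} [Fintype Ω] [Nonempty Ω]
    [Fintype α] (P : Ω → ℝ) (hP : ∀ ω, 0 < P ω) (hsum : ∑ ω, P ω = 1) (X : Ω → α) :
    entropy P X = ∑ S ∈ content X, interiorLoss S P :=
  entropy_eq_sum_content_general P hsum X
end

section
/- The Gács–Körner common information is attained by the finest common coarsening: let X : Ω → α and Y : Ω → β be random variables on a finite probability space, let ≈ be the equivalence relation on Ω generated by the relation {(ω, ω′) : X(ω) = X(ω′) or Y(ω) = Y(ω′)}, and let Z : Ω → Ω/≈ be the quotient map. Then (i) there exist functions f : α → Ω/≈ and g : β → Ω/≈ with Z = f ∘ X and Z = g ∘ Y, and (ii) for any type γ and any functions f′ : α → γ, g′ : β → γ with f′ ∘ X = g′ ∘ Y, one has H(f′ ∘ X) ≤ H(Z). -/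
/-!
Part (i): `X ω = X ω'` and `Y ω = Y ω'` are both generating relations of `≈`, so the quotient
map is constant on the fibres of `X` and of `Y`. Part (ii): `f' ∘ X = g' ∘ Y` is constant on
pairs with `X ω = X ω'` and on pairs with `Y ω = Y ω'`, hence on `≈`-classes, so it is a
function of `Z`; and a function of a random variable has no more entropy than the variable,
because merging masses `p_i` into `Σ p_i` can only decrease `Σ p log (1/p)`.
-/

open Finset
open scoped Classical

theorem Function.FactorsThrough.exists_comp_eq {Ω α κ : Type*} [Nonempty Ω]
    {Z : Ω → κ} {X : Ω → α} (h : Z.FactorsThrough X) : ∃ f : α → κ, Z = f ∘ X :=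
  ⟨Function.extend X Z fun _ => Z (Classical.arbitrary Ω),
    funext fun ω => (h.extend_apply _ ω).symm⟩

theorem totalLoss_nonneg {ι : Type*} (s : Finset ι) {p : ι → ℝ} (hp : ∀ i ∈ s, 0 ≤ p i) :
    0 ≤ totalLoss s p := by
  rw [totalLoss, sub_nonneg, Finset.sum_mul]
  refine Finset.sum_le_sum fun i hi => ?_
  rcases (hp i hi).eq_or_lt with hpi | hpi
  · simp [← hpi]
  have hle : p i ≤ ∑ j ∈ s, p j := Finset.single_le_sum hp hi
  gcongr
  exact one_div_pos.mpr (hpi.trans_le hle)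

section Entropy

variable {Ω κ γ : Type*} [Fintype Ω] (P : Ω → ℝ)

theorem probOf_comp (Z : Ω → κ) (h : κ → γ) (c : γ) :
    probOf P (h ∘ Z) c = ∑ z ∈ (univ.image Z).filter (h · = c), probOf P Z z := by
  rw [probOf, ← Finset.sum_fiberwise_of_maps_to (g := Z)
    (t := (univ.image Z).filter (h · = c)) (by simp)]
  refine Finset.sum_congr rfl fun z hz => Finset.sum_congr ?_ fun _ _ => rfl
  ext ω
  simp only [Finset.mem_filter, Finset.mem_univ, true_and, Function.comp_apply] at hz ⊢
  exact ⟨And.right, fun hω => ⟨hω ▸ hz.2, hω⟩⟩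

theorem entropy_comp_le (hP : ∀ ω, 0 ≤ P ω) (Z : Ω → κ) (h : κ → γ) :
    entropy P (h ∘ Z) ≤ entropy P Z := by
  have hprob : ∀ z, 0 ≤ probOf P Z z := fun z => Finset.sum_nonneg fun ω _ => hP ω
  rw [entropy, entropy, ← Finset.image_image, ← Finset.sum_fiberwise_of_maps_to
    (g := h) (t := (univ.image Z).image h) fun z hz => Finset.mem_image_of_mem h hz]
  refine Finset.sum_le_sum fun c _ => ?_
  rw [probOf_comp]
  exact sub_nonneg.mp (totalLoss_nonneg _ fun z _ => hprob z)

theorem entropy_le_entropy_quotientMk (hP : ∀ ω, 0 ≤ P ω) {s : Setoid Ω} {W : Ω → γ}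
    (h : s ≤ Setoid.ker W) : entropy P W ≤ entropy P (Quotient.mk s) :=
  entropy_comp_le P hP (Quotient.mk s) (Quotient.lift W fun _ _ hab => h hab)

end Entropy

universe u

theorem gacsKorner_attained_general {Ω α β : Type*} [Fintype Ω] [Nonempty Ω]
    (P : Ω → ℝ) (hP : ∀ ω, 0 < P ω)
    (X : Ω → α) (Y : Ω → β)
    (s : Setoid Ω) (hs : s = Relation.EqvGen.setoid (fun ω ω' => X ω = X ω' ∨ Y ω = Y ω'))
    (Z : Ω → Quotient s) (hZ : Z = Quotient.mk s) :
    ((∃ f : α → Quotient s, Z = f ∘ X) ∧ (∃ g : β → Quotient s, Z = g ∘ Y)) ∧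
      ∀ (γ : Type u) (f' : α → γ) (g' : β → γ), f' ∘ X = g' ∘ Y →
        entropy P (f' ∘ X) ≤ entropy P Z := by
  subst hs hZ
  refine ⟨⟨Function.FactorsThrough.exists_comp_eq fun ω ω' h => ?_,
    Function.FactorsThrough.exists_comp_eq fun ω ω' h => ?_⟩, fun γ f' g' hfg => ?_⟩
  · exact Quotient.sound (Relation.EqvGen.rel _ _ (Or.inl h))
  · exact Quotient.sound (Relation.EqvGen.rel _ _ (Or.inr h))
  refine entropy_le_entropy_quotientMk P (fun ω => (hP ω).le) (Setoid.eqvGen_le ?_)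
  rintro ω ω' (hX | hY)
  · exact congrArg f' hX
  · change (f' ∘ X) ω = (f' ∘ X) ω'
    rw [hfg, Function.comp_apply, Function.comp_apply, hY]

/-- the Gács–Körner common information is attained by the finest common
coarsening.  Let `≈` be the equivalence relation generated by
`{(ω, ω') : X ω = X ω' ∨ Y ω = Y ω'}` and `Z : Ω → Ω/≈` the quotient map.  Then
(i) `Z` factors through both `X` and `Y`, and (ii) any common coarsening
`f' ∘ X = g' ∘ Y` has entropy at most `H(Z)`. -/
theorem gacsKorner_attained {Ω α β : Type*} [Fintype Ω] [Nonempty Ω]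
    (P : Ω → ℝ) (hP : ∀ ω, 0 < P ω) (hsum : ∑ ω, P ω = 1)
    (X : Ω → α) (Y : Ω → β)
    (s : Setoid Ω) (hs : s = Relation.EqvGen.setoid (fun ω ω' => X ω = X ω' ∨ Y ω = Y ω'))
    (Z : Ω → Quotient s) (hZ : Z = Quotient.mk s) :
    ((∃ f : α → Quotient s, Z = f ∘ X) ∧ (∃ g : β → Quotient s, Z = g ∘ Y)) ∧
      ∀ (γ : Type u) (f' : α → γ) (g' : β → γ), f' ∘ X = g' ∘ Y →
        entropy P (f' ∘ X) ≤ entropy P Z :=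
  gacsKorner_attained_general P hP X Y s hs Z hZ
end
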